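/- arXiv:2403.00469 — 7 statements merged into one kernel-verified Lean document; each statement's English description precedes it below -/
import Mathlib

section
/- Let ε = (1+√5)/2. For all real c with 1 ≤ c ≤ ε and all p with 0.24 ≤ p ≤ 0.66, setting a = p(c−ε) + 1/√5, we have −1 < a < 1 and ((1−a)/(1+a))²·c + 1/c − 1/(1+a)² ≥ 0. -/
theorem stmt0 (ε c p a : ℝ) (hε : ε = (1 + Real.sqrt 5) / 2)
    (hc1 : 1 ≤ c) (hc2 : c ≤ ε) (hp1 : 0.24 ≤ p) (hp2 : p ≤ 0.66)
    (ha : a = p * (c - ε) + 1 / Real.sqrt 5) :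
    (-1 < a ∧ a < 1) ∧
      ((1 - a) / (1 + a)) ^ 2 * c + 1 / c - 1 / (1 + a) ^ 2 ≥ 0 := by
  have hs0 : (0:ℝ) < Real.sqrt 5 := Real.sqrt_pos.mpr (by norm_num)
  have hs2 : (Real.sqrt 5) ^ 2 = 5 := Real.sq_sqrt (by norm_num)
  have hsl : (2.23:ℝ) < Real.sqrt 5 := by nlinarith
  have hsu : Real.sqrt 5 < 2.2361 := by nlinarith
  have hce : c - ε ≤ 0 := by linarith
  have hcel : ε - 1 ≤ 0.6181 := by rw [hε]; nlinarith
  have hinvl : (0.447:ℝ) < 1 / Real.sqrt 5 := by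
    rw [lt_div_iff₀ hs0]; nlinarith
  have hinvu : 1 / Real.sqrt 5 < 0.449 := by
    rw [div_lt_iff₀ hs0]; nlinarith
  have hau : a < 0.449 := by
    have : p * (c - ε) ≤ 0 := mul_nonpos_of_nonneg_of_nonpos (by linarith) hce
    nlinarith
  have hal : 0.03 < a := by
    have h1 : p * (c - ε) ≥ 0.66 * (c - ε) := by nlinarith
    have h2 : c - ε ≥ -(0.6181) := by linarith
    nlinarith
  have h1a : (0:ℝ) < 1 + a := by linarith
  have hc0 : (0:ℝ) < c := by linarith
  refine ⟨⟨by linarith, by linarith⟩, ?_⟩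
  have key : (0:ℝ) ≤ (1 - a) ^ 2 * c ^ 2 + (1 + a) ^ 2 - c := by
    nlinarith [sq_nonneg ((1 - a) * c - 1), sq_nonneg a]
  have heq : ((1 - a) / (1 + a)) ^ 2 * c + 1 / c - 1 / (1 + a) ^ 2
      = ((1 - a) ^ 2 * c ^ 2 + (1 + a) ^ 2 - c) / (c * (1 + a) ^ 2) := by
    field_simp
  rw [ge_iff_le, heq]
  exact div_nonneg key (by positivity)
end

section
/- Let ε = (1+√5)/2. For all real c with ε⁻¹ ≤ c ≤ 1, setting a = c − ε⁻¹ − 1/√5, we have −1 < a < 1 and ((1−a)/(1+a))²·c + 1/c − 1/(1+a)² ≥ 0. -/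
theorem stmt1 (ε c a : ℝ) (hε : ε = (1 + Real.sqrt 5) / 2)
    (hc1 : ε⁻¹ ≤ c) (hc2 : c ≤ 1)
    (ha : a = c - ε⁻¹ - 1 / Real.sqrt 5) :
    (-1 < a ∧ a < 1) ∧
      ((1 - a) / (1 + a)) ^ 2 * c + 1 / c - 1 / (1 + a) ^ 2 ≥ 0 := by
  set s := Real.sqrt 5 with hsdef
  have hs2 : s ^ 2 = 5 := Real.sq_sqrt (by norm_num)
  have hslb : (2.2 : ℝ) < s := by nlinarith [Real.sqrt_nonneg 5]
  have hsub : s < 2.3 := by nlinarith [Real.sqrt_nonneg 5]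
  have hεinv : ε⁻¹ = (s - 1) / 2 := by
    rw [hε]
    exact inv_eq_of_mul_eq_one_right (by nlinarith)
  have hsinv : 1 / s = s / 5 := by
    rw [div_eq_div_iff (by nlinarith) (by norm_num)]; nlinarith
  have ha' : a = c - (7 * s - 5) / 10 := by
    rw [ha, hεinv, hsinv]; ring
  have hc1' : (s - 1) / 2 ≤ c := by rwa [hεinv] at hc1
  have hcpos : 0 < c := by nlinarith
  have h1a : 0 < 1 + a := by nlinarith
  refine ⟨⟨by nlinarith, by nlinarith⟩, ?_⟩
  have key : ((1 - a) / (1 + a)) ^ 2 * c + 1 / c - 1 / (1 + a) ^ 2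
      = ((1 - a) ^ 2 * c ^ 2 + (1 + a) ^ 2 - c) / (c * (1 + a) ^ 2) := by
    field_simp
  rw [key]
  apply div_nonneg _ (by positivity)
  nlinarith [sq_nonneg (c - (s-1)/2), sq_nonneg (1 - c), sq_nonneg (c*(1-a) - 1),
    sq_nonneg (c*(1-a) + 1), mul_pos hcpos h1a, sq_nonneg (c - 1 + a)]
end

section
/- Let ε = (1+√5)/2 and q = 0.9. For all t with 0 ≤ t ≤ ε⁻¹, we have (−qt + 1 − √5)(ε − t)² − qt + 1 + √5 ≥ 0. -/
theorem stmt5 (ε q t : ℝ) (hε : ε = (1 + Real.sqrt 5) / 2) (hq : q = 0.9)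
    (ht1 : 0 ≤ t) (ht2 : t ≤ ε⁻¹) :
    (-q * t + 1 - Real.sqrt 5) * (ε - t) ^ 2 - q * t + 1 + Real.sqrt 5 ≥ 0 := by
  have hs : Real.sqrt 5 ^ 2 = 5 := Real.sq_sqrt (by norm_num)
  have hs1 : (2:ℝ) ≤ Real.sqrt 5 := by nlinarith [Real.sqrt_nonneg 5]
  have hs2 : Real.sqrt 5 ≤ 2.25 := by nlinarith [Real.sqrt_nonneg 5]
  have hεv : ε⁻¹ = (Real.sqrt 5 - 1) / 2 := by
    rw [hε]
    exact inv_eq_of_mul_eq_one_left (by nlinarith)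
  rw [hεv] at ht2
  subst hε hq
  nlinarith [sq_nonneg t, sq_nonneg (t - 1), mul_nonneg ht1 ht1, sq_nonneg (Real.sqrt 5 - 2*t), mul_nonneg ht1 (sub_nonneg.2 ht2)]
end

section
/- Let ε = (1+√5)/2 and q = 0.9. For all t with 0 ≤ t ≤ ε⁻¹, the cubic F(t) = q(t−ε)(qt−1)(qt−2) − 4(qt² + 2(ε⁻¹ − εq)t + q(ε²+1) − 4) is nonnegative. -/
theorem stmt6 (ε q t : ℝ) (hε : ε = (1 + Real.sqrt 5) / 2) (hq : q = 0.9)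
    (ht1 : 0 ≤ t) (ht2 : t ≤ ε⁻¹) :
    q * (t - ε) * (q * t - 1) * (q * t - 2) -
      4 * (q * t ^ 2 + 2 * (ε⁻¹ - ε * q) * t + q * (ε ^ 2 + 1) - 4) ≥ 0 := by
  have hs2 : Real.sqrt 5 ^ 2 = 5 := Real.sq_sqrt (by norm_num)
  have hs1 : (2:ℝ) < Real.sqrt 5 := by nlinarith [Real.sqrt_nonneg 5]
  have hs3 : Real.sqrt 5 < 2.25 := by nlinarith [Real.sqrt_nonneg 5]
  have hεpos : 0 < ε := by rw [hε]; nlinarith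
  have hinv : ε⁻¹ = (Real.sqrt 5 - 1) / 2 := by
    exact inv_eq_of_mul_eq_one_right (by rw [hε]; nlinarith)
  rw [hinv] at ht2 ⊢
  subst hε hq
  set s := Real.sqrt 5
  nlinarith [sq_nonneg t, sq_nonneg (t - (s-1)/2), mul_nonneg ht1 (sub_nonneg.2 ht2), sq_nonneg (t*s), mul_nonneg (mul_nonneg ht1 ht1) (sub_nonneg.2 ht2), mul_nonneg (mul_nonneg ht1 (sub_nonneg.2 ht2)) (sub_nonneg.2 ht2), sq_nonneg (s - 2.2)]
end

section
/- Let ε = (1+√5)/2, q = 0.9, and b ≥ 1/2. For all c with 1 ≤ c ≤ ε, setting a = (q/√5)(c−ε) + 1/√5, the quantity Δ = (√5·a(5a²−1))/16 + (√5·b/2)·[(a−1)c + (a+1)/c] is nonnegative. -/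
theorem stmt7 (ε q b c a : ℝ) (hε : ε = (1 + Real.sqrt 5) / 2) (hq : q = 0.9)
    (hb : 1 / 2 ≤ b) (hc1 : 1 ≤ c) (hc2 : c ≤ ε)
    (ha : a = (q / Real.sqrt 5) * (c - ε) + 1 / Real.sqrt 5) :
    Real.sqrt 5 * (a * (5 * a ^ 2 - 1)) / 16 +
      Real.sqrt 5 * b / 2 * ((a - 1) * c + (a + 1) / c) ≥ 0 := by
  have hs0 : (0:ℝ) ≤ Real.sqrt 5 := Real.sqrt_nonneg 5
  have hs : Real.sqrt 5 ^ 2 = 5 := Real.sq_sqrt (by norm_num)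
  set s := Real.sqrt 5 with hsdef
  have hsu : s < (9/4 : ℝ) := by nlinarith
  have hsne : s ≠ 0 := by intro h; rw [h] at hs; norm_num at hs
  have hc0 : (0:ℝ) < c := lt_of_lt_of_le one_pos hc1
  set u : ℝ := (9/10) * (c - (1+s)/2) + 1 with hu0
  have hu : s * a = u := by
    rw [ha, hq, hε, hu0]
    field_simp
    ring
  have e1 : s * (a * (5 * a ^ 2 - 1)) = u * (u^2 - 1) := by
    linear_combination (-(s*a^3)) * hs + (s^2*a^2 + s*a*u + u^2 - 1) * hu
  have e2 : s * (a - 1) = u - s := by linarith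
  have e3 : s * (a + 1) = u + s := by linarith
  have e4 : s * b / 2 * ((a - 1) * c + (a + 1) / c)
      = b / 2 * ((s*(a-1)) * c + (s*(a+1)) / c) := by ring
  rw [ge_iff_le, e1, e4, e2, e3]
  -- t := (1+s)/2 - c bounds
  have ht : 0 ≤ (1+s)/2 - c := by rw [hε] at hc2; linarith
  have ht2 : (1+s)/2 - c ≤ 5/8 := by linarith
  have hprod : 0 ≤ ((1+s)/2 - c) * (5/8 - ((1+s)/2 - c)) :=
    mul_nonneg ht (by linarith)
  have h5 : s^2 - 5 = 0 := by rw [hs]; ring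
  -- nonnegativity of the numerator of the b-coefficient
  have hHN : 0 ≤ 7/4 - 9/20*s + (19/10 - 1/10*s)*((1+s)/2 - c) - 9/10*((1+s)/2 - c)^2 := by
    linarith [hprod, mul_nonneg ht (by linarith : (0:ℝ) ≤ 19/10 - 1/10*s), ht, hsu]
  have hN : 0 ≤ (u - s) * c^2 + (u + s) := by
    have eq : (u - s) * c^2 + (u + s)
        = ((1+s)/2 - c) * (7/4 - 9/20*s + (19/10 - 1/10*s)*((1+s)/2 - c)
            - 9/10*((1+s)/2 - c)^2)
          + (s^2 - 5) * (-(1/4) - 1/4*s + 31/40*((1+s)/2 - c)) := by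
      rw [hu0]; ring
    rw [eq, h5]
    simpa using mul_nonneg ht hHN
  have hM : 0 ≤ (u - s) * c + (u + s) / c := by
    have eqM : (u - s) * c + (u + s) / c = ((u - s) * c^2 + (u + s)) / c := by
      field_simp
    rw [eqM]
    exact div_nonneg hN hc0.le
  -- nonnegativity of the b = 1/2 combination
  have hHF : 0 ≤ 61/10 - 27/10*s + (2123/200 + 163/200*s)*((1+s)/2 - c)
      - (12789/2000 + 729/2000*s)*((1+s)/2 - c)^2 + 729/1000*((1+s)/2 - c)^3 := by
    linarith [hprod, mul_nonneg ht (by linarith : (0:ℝ) ≤ s),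
      mul_nonneg (mul_nonneg ht ht) (by linarith : (0:ℝ) ≤ 9/4 - s),
      mul_nonneg (mul_nonneg ht ht) ht, ht, hsu]
  have hF : 0 ≤ c * (u * (u^2 - 1)) + 4 * ((u - s) * c^2 + (u + s)) := by
    have eqF : c * (u * (u^2 - 1)) + 4 * ((u - s) * c^2 + (u + s))
        = ((1+s)/2 - c) * (61/10 - 27/10*s + (2123/200 + 163/200*s)*((1+s)/2 - c)
            - (12789/2000 + 729/2000*s)*((1+s)/2 - c)^2 + 729/1000*((1+s)/2 - c)^3)
          + (s^2 - 5) * (-1 - s + 31/10*((1+s)/2 - c)) := by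
      rw [hu0]; ring
    rw [eqF, h5]
    simpa using mul_nonneg ht hHF
  have hhalf : 0 ≤ u * (u^2 - 1) / 16 + (1:ℝ)/4 * ((u - s) * c + (u + s) / c) := by
    have expand : u * (u^2 - 1) / 16 + (1:ℝ)/4 * ((u - s) * c + (u + s) / c)
        = (c * (u * (u^2 - 1)) + 4 * ((u - s) * c^2 + (u + s))) / (16 * c) := by
      field_simp; ring
    rw [expand]
    exact div_nonneg hF (by positivity)
  have hbM : (1:ℝ)/4 * ((u - s) * c + (u + s) / c)
      ≤ b / 2 * ((u - s) * c + (u + s) / c) := by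
    apply mul_le_mul_of_nonneg_right _ hM
    linarith
  linarith
end

section
/- Let ε = (1+√5)/2 and b ≥ 1/2. For all c with ε⁻¹ ≤ c ≤ 1, setting a = c − ε⁻¹ − 1/√5, the quantity Δ = (√5·a(5a²−1))/16 + (√5·b/2)·[(a−1)c + (a+1)/c] is nonpositive. -/
/-! Put `c = φ⁻¹ + t` with `0 ≤ t ≤ 1 - φ⁻¹`, so that `a = t - 1/√5`. Then
`√5 a (5a² - 1) = x (x - 1) (x - 2)` with `x = √5 t`, and the numerator of
`(a - 1) c + (a + 1) / c` factors as `t · q t` for a convex quadratic `q` that is negative at both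
ends of the interval. Hence the `b`-term is nonpositive, `Δ` decreases in `b`, and at `b = 1/2`
the quantity `16 c Δ / (√5 t)` is an explicit cubic in `t` which is negative on the interval. -/

open Real goldenRatio

namespace Gotzky

lemma inv_goldenRatio_eq : φ⁻¹ = (√5 - 1) / 2 := by
  rw [inv_goldenRatio]; ring

lemma one_div_sqrt_five : 1 / √5 = √5 / 5 := by
  rw [div_eq_div_iff (by positivity) (by norm_num), one_mul, mul_self_sqrt (by norm_num)]

lemma sqrt_five_mul_cubic (t : ℝ) :
    √5 * ((t - 1 / √5) * (5 * (t - 1 / √5) ^ 2 - 1)) =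
      √5 * t * ((√5 * t - 1) * (√5 * t - 2)) := by
  have hs : √5 ^ 2 = 5 := sq_sqrt (by norm_num)
  rw [one_div_sqrt_five]
  linear_combination (3 * √5 * t / 5 - √5 * t ^ 3 - √5 ^ 2 / 25) * hs

noncomputable def q (t : ℝ) : ℝ := t ^ 2 + (4 * √5 / 5 - 2) * t + (5 / 2 - 13 * √5 / 10)

lemma mul_add_div_eq {t : ℝ} (h : φ⁻¹ + t ≠ 0) :
    (t - 1 / √5 - 1) * (φ⁻¹ + t) + (t - 1 / √5 + 1) / (φ⁻¹ + t) = t * q t / (φ⁻¹ + t) := by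
  have hs : √5 ^ 2 = 5 := sq_sqrt (by norm_num)
  rw [eq_div_iff h, add_mul, div_mul_cancel₀ _ h, inv_goldenRatio_eq, one_div_sqrt_five, q]
  linear_combination (t - √5 - 3) / 20 * hs

section Interval

variable {t : ℝ} (h0 : 0 ≤ t) (h1 : t ≤ 1 - φ⁻¹)
include h0 h1

lemma q_nonpos : q t ≤ 0 := by
  have hs : √5 ^ 2 = 5 := sq_sqrt (by norm_num)
  have hs2 : 2 < √5 := by nlinarith [sqrt_nonneg 5]
  rw [inv_goldenRatio_eq] at h1
  unfold q
  nlinarith [mul_nonneg h0 (sub_nonneg.2 h1)]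

lemma cubic_nonpos : (φ⁻¹ + t) * ((√5 * t - 1) * (√5 * t - 2)) + 4 * q t ≤ 0 := by
  have hs : √5 ^ 2 = 5 := sq_sqrt (by norm_num)
  have hs2 : 2 < √5 := by nlinarith [sqrt_nonneg 5]
  rw [inv_goldenRatio_eq] at h1 ⊢
  unfold q
  nlinarith [mul_nonneg h0 (sub_nonneg.2 h1), mul_nonneg (mul_nonneg h0 h0) (sub_nonneg.2 h1)]

end Interval

end Gotzky

open Gotzky in
theorem stmt8 (ε b c a : ℝ) (hε : ε = (1 + Real.sqrt 5) / 2)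
    (hb : 1 / 2 ≤ b) (hc1 : ε⁻¹ ≤ c) (hc2 : c ≤ 1)
    (ha : a = c - ε⁻¹ - 1 / Real.sqrt 5) :
    Real.sqrt 5 * (a * (5 * a ^ 2 - 1)) / 16 +
      Real.sqrt 5 * b / 2 * ((a - 1) * c + (a + 1) / c) ≤ 0 := by
  obtain rfl : ε = φ := hε
  obtain ⟨t, rfl⟩ : ∃ t, c = φ⁻¹ + t := ⟨c - φ⁻¹, by ring⟩
  obtain rfl : a = t - 1 / √5 := by rw [ha]; ring
  have ht0 : 0 ≤ t := by linarith
  have ht1 : t ≤ 1 - φ⁻¹ := by linarith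
  have hc : 0 < φ⁻¹ + t := by positivity
  have hT : t * q t / (φ⁻¹ + t) ≤ 0 :=
    div_nonpos_of_nonpos_of_nonneg (mul_nonpos_of_nonneg_of_nonpos ht0 (q_nonpos ht0 ht1)) hc.le
  rw [sqrt_five_mul_cubic, mul_add_div_eq hc.ne']
  calc √5 * t * ((√5 * t - 1) * (√5 * t - 2)) / 16 + √5 * b / 2 * (t * q t / (φ⁻¹ + t))
      ≤ √5 * t * ((√5 * t - 1) * (√5 * t - 2)) / 16 + √5 / 4 * (t * q t / (φ⁻¹ + t)) := by
        have hb' : √5 / 4 ≤ √5 * b / 2 := by nlinarith [sqrt_nonneg 5]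
        linarith [mul_le_mul_of_nonpos_right hb' hT]
    _ = √5 * t / (16 * (φ⁻¹ + t)) * ((φ⁻¹ + t) * ((√5 * t - 1) * (√5 * t - 2)) + 4 * q t) := by
        field_simp
        ring
    _ ≤ 0 := mul_nonpos_of_nonneg_of_nonpos (by positivity) (cubic_nonpos ht0 ht1)
end

section
/- For every a ∈ (−1,1) and every real numbers s₁, s₂, there exists an algebraic integer ν = A + B·(1+√5)/2 with A, B ∈ ℤ such that −√5/2 ≤ s₁ + (ν − ν') ≤ √5/2 and −1 ≤ s₂ + (1+a)ν + (1−a)ν' ≤ 1, where ν' = A + B·(1−√5)/2 is the Galois conjugate of ν. -/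
theorem stmt19 (a s₁ s₂ : ℝ) (ha1 : -1 < a) (ha2 : a < 1) :
    ∃ A B : ℤ,
      -(Real.sqrt 5) / 2 ≤
          s₁ + ((A + B * (1 + Real.sqrt 5) / 2) - (A + B * (1 - Real.sqrt 5) / 2)) ∧
      s₁ + ((A + B * (1 + Real.sqrt 5) / 2) - (A + B * (1 - Real.sqrt 5) / 2)) ≤
          Real.sqrt 5 / 2 ∧
      -1 ≤ s₂ + ((1 + a) * (A + B * (1 + Real.sqrt 5) / 2) +
          (1 - a) * (A + B * (1 - Real.sqrt 5) / 2)) ∧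
      s₂ + ((1 + a) * (A + B * (1 + Real.sqrt 5) / 2) +
          (1 - a) * (A + B * (1 - Real.sqrt 5) / 2)) ≤ 1 := by
  have h5 : (0:ℝ) < Real.sqrt 5 := Real.sqrt_pos.mpr (by norm_num)
  set r : ℝ := Real.sqrt 5 with hr
  set B : ℤ := round (-s₁ / r) with hBdef
  have hB : |(-s₁ / r) - B| ≤ 1/2 := abs_sub_round _
  have key1 : |s₁ + B * r| ≤ r / 2 := by
    have heq : -s₁ / r - B = -((s₁ + B * r) / r) := by field_simp; ring
    rw [heq, abs_neg, abs_div, abs_of_pos h5, div_le_iff₀ h5] at hB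
    linarith
  set A : ℤ := round (-(s₂ + B + a * B * r) / 2) with hAdef
  have hA : |(-(s₂ + B + a * B * r) / 2) - A| ≤ 1/2 := abs_sub_round _
  have key2 : |s₂ + 2*A + B + a * B * r| ≤ 1 := by
    have heq : -(s₂ + B + a * B * r) / 2 - A = -((s₂ + 2*A + B + a * B * r) / 2) := by
      ring
    rw [heq, abs_neg, abs_div, abs_of_pos (by norm_num : (0:ℝ) < 2),
      div_le_iff₀ (by norm_num : (0:ℝ) < 2)] at hA
    linarith
  refine ⟨A, B, ?_, ?_, ?_, ?_⟩ <;>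
  · have e1 : s₁ + ((A + B * (1 + r) / 2) - (A + B * (1 - r) / 2)) = s₁ + B * r := by ring
    have e2 : s₂ + ((1 + a) * (A + B * (1 + r) / 2) +
        (1 - a) * (A + B * (1 - r) / 2)) = s₂ + 2*A + B + a * B * r := by ring
    rw [abs_le] at key1 key2
    first
      | (rw [e1]; linarith [key1.1, key1.2])
      | (rw [e2]; linarith [key2.1, key2.2])
end
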